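/- Fundamental theorem of reversible computing (set-theoretic form): for any types A and B and any function f : A → B, there exist types H (the 'heap') and G (the 'garbage') together with a bijection e : A ⊕ H ≃ B × G such that for every a : A, the first component of e (Sum.inl a) equals f a. In other words, every function factors as a coproduct injection, followed by a bijection, followed by a product projection. -/

import Mathlib

/-!
Injecting `A` into `B × A` along the graph `a ↦ (f a, a)` of `f`, the product `B × A` splits as the
graph, a copy of `A`, plus its complement. Taking the complement as heap and `A` itself as
garbage, the splitting is the required bijection.
-/

universe u v w

theorem Function.Injective.exists_sum_equiv {α : Type*} {β : Type w} {g : α → β}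
    (hg : g.Injective) :
    ∃ (γ : Type w) (e : α ⊕ γ ≃ β), ∀ a, e (Sum.inl a) = g a := by
  classical
  exact ⟨((Set.range g)ᶜ : Set β),
    ((Equiv.ofInjective g hg).sumCongr (Equiv.refl _)).trans (Equiv.Set.sumCompl _),
    fun _ => rfl⟩

/-- Fundamental theorem of reversible computing (set-theoretic form):
every function `f : A → B` factors as a coproduct injection, followed by a
bijection `A ⊕ H ≃ B × G`, followed by a product projection. -/
theorem fundamental_theorem_of_reversible_computing {A : Type u} {B : Type v}
    (f : A → B) :
    ∃ (H G : Type (max u v)) (e : A ⊕ H ≃ B × G),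
      ∀ a : A, (e (Sum.inl a)).1 = f a := by
  have graph_injective : (fun a => (f a, ULift.up.{v} a)).Injective :=
    fun _ _ h => ULift.up_injective (Prod.ext_iff.mp h).2
  obtain ⟨H, e, he⟩ := graph_injective.exists_sum_equiv
  exact ⟨H, ULift.{v} A, e, fun a => congrArg Prod.fst (he a)⟩
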